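/- Let Ψ, Φ ∈ ℝ^{m×l} have orthonormal columns {ψ_i} and {φ_i}, let A ∈ ℝ^{m×m} be symmetric, γ ∈ ℝ, and B = ΨᵀAΦ ∈ ℝ^{l×l}. Then the reduced system p' = −B q − γΨᵀ((Φq)·(Ψp)² + (Φq)³), q' = Bᵀ p + γΦᵀ((Ψp)·(Φq)² + (Ψp)³) conserves the reduced Hamiltonian H_r(p,q) = −(1/2)((Ψp)ᵀA(Ψp) + (Φq)ᵀA(Φq)) − (γ/4)Σ_j((Ψp)_j² + (Φq)_j²)², provided Ψ = Φ. -/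

import Mathlib

/-!
With `B = Ψᵀ A Ψ` symmetric, the reduced Hamiltonian `H(x, y)` is symmetric in `x, y` and its
partial gradients are `∂ₓH = -B x - γ Ψᵀ((Ψx)(Ψy)² + (Ψx)³)` and `∂_yH` the same with `x, y`
swapped. The reduced system is `p' = ∂_qH`, `q' = -∂_pH`, so along a solution
`dH/dt = ∂_pH ⬝ p' + ∂_qH ⬝ q' = ∂_pH ⬝ ∂_qH - ∂_qH ⬝ ∂_pH = 0`.
-/

open Matrix

theorem Matrix.IsSymm.transpose_mul_mul {R : Type*} [CommSemiring R] {ι κ : Type*} [Fintype κ]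
    {A : Matrix κ κ R} (hA : A.IsSymm) (Ψ : Matrix κ ι R) : (Ψᵀ * A * Ψ).IsSymm := by
  rw [IsSymm, transpose_mul, transpose_mul, transpose_transpose, hA.eq, Matrix.mul_assoc]

theorem Matrix.mulVec_dotProduct_mulVec {R : Type*} [CommSemiring R] {ι κ : Type*} [Fintype ι]
    [Fintype κ] (A : Matrix κ κ R) (Ψ : Matrix κ ι R) (x y : ι → R) :
    (Ψ *ᵥ x) ⬝ᵥ A *ᵥ (Ψ *ᵥ y) = x ⬝ᵥ (Ψᵀ * A * Ψ) *ᵥ y := by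
  rw [← mulVec_mulVec, ← mulVec_mulVec, dotProduct_transpose_mulVec, dotProduct_comm]

/-- `|w|² Re w` for `w = u + i v`. -/
def nlsNonlinearity {R : Type*} [CommRing R] {ι : Type*} (u v : ι → R) : ι → R :=
  fun j => u j * v j ^ 2 + u j ^ 3

section Calculus

variable {𝕜 : Type*} [NontriviallyNormedField 𝕜] {ι : Type*} [Fintype ι]
  {t : 𝕜} {f g : 𝕜 → ι → 𝕜} {f' g' : ι → 𝕜}

theorem HasDerivAt.matrix_mulVec {κ : Type*} (M : Matrix κ ι 𝕜) (hf : HasDerivAt f f' t) :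
    HasDerivAt (fun s => M *ᵥ f s) (M *ᵥ f') t := by
  rw [hasDerivAt_pi] at hf ⊢
  intro i
  simpa [mulVec, dotProduct] using HasDerivAt.fun_sum fun k _ => (hf k).const_mul (M i k)

theorem HasDerivAt.dotProduct (hf : HasDerivAt f f' t) (hg : HasDerivAt g g' t) :
    HasDerivAt (fun s => f s ⬝ᵥ g s) (f' ⬝ᵥ g t + f t ⬝ᵥ g') t := by
  rw [hasDerivAt_pi] at hf hg
  simpa [_root_.dotProduct, Finset.sum_add_distrib] using
    HasDerivAt.fun_sum fun i _ => (hf i).mul (hg i)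

theorem HasDerivAt.dotProduct_mulVec_self {A : Matrix ι ι 𝕜} (hA : A.IsSymm)
    (hf : HasDerivAt f f' t) :
    HasDerivAt (fun s => f s ⬝ᵥ A *ᵥ f s) (2 * (f' ⬝ᵥ A *ᵥ f t)) t := by
  refine (hf.dotProduct (hf.matrix_mulVec A)).congr_deriv ?_
  rw [← dotProduct_transpose_mulVec, hA.eq, two_mul]

theorem HasDerivAt.sum_sq_add_sq_sq {u v : 𝕜 → ι → 𝕜} {u' v' : ι → 𝕜}
    (hu : HasDerivAt u u' t) (hv : HasDerivAt v v' t) :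
    HasDerivAt (fun s => ∑ j, (u s j ^ 2 + v s j ^ 2) ^ 2)
      (4 * (nlsNonlinearity (u t) (v t) ⬝ᵥ u' + nlsNonlinearity (v t) (u t) ⬝ᵥ v')) t := by
  rw [hasDerivAt_pi] at hu hv
  refine (HasDerivAt.fun_sum fun j _ => (((hu j).pow 2).add ((hv j).pow 2)).pow 2).congr_deriv ?_
  simp only [nlsNonlinearity, _root_.dotProduct, Pi.add_apply, Pi.pow_apply,
    ← Finset.sum_add_distrib, Finset.mul_sum]
  refine Finset.sum_congr rfl fun j _ => ?_
  push_cast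
  ring

end Calculus

section ReducedNLS

variable {ι κ : Type*} [Fintype ι] [Fintype κ] (γ : ℝ) (A : Matrix κ κ ℝ) (Ψ : Matrix κ ι ℝ)

noncomputable def nlsHamiltonian (x y : ι → ℝ) : ℝ :=
  -(1 / 2) * ((Ψ *ᵥ x) ⬝ᵥ A *ᵥ (Ψ *ᵥ x) + (Ψ *ᵥ y) ⬝ᵥ A *ᵥ (Ψ *ᵥ y))
    - γ / 4 * ∑ j, ((Ψ *ᵥ x) j ^ 2 + (Ψ *ᵥ y) j ^ 2) ^ 2

/-- The partial gradient `∂ₓ H(x, y)` of `nlsHamiltonian`; since `H` is symmetric in `x` and `y`,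
`∂_y H(x, y)` is `nlsGrad y x`. -/
def nlsGrad (x y : ι → ℝ) : ι → ℝ :=
  -((Ψᵀ * A * Ψ) *ᵥ x) - γ • Ψᵀ *ᵥ nlsNonlinearity (Ψ *ᵥ x) (Ψ *ᵥ y)

variable {γ A Ψ}

theorem HasDerivAt.nlsHamiltonian (hA : A.IsSymm) {p q : ℝ → ι → ℝ} {p' q' : ι → ℝ} {t : ℝ}
    (hp : HasDerivAt p p' t) (hq : HasDerivAt q q' t) :
    HasDerivAt (fun s => nlsHamiltonian γ A Ψ (p s) (q s))
      (nlsGrad γ A Ψ (p t) (q t) ⬝ᵥ p' + nlsGrad γ A Ψ (q t) (p t) ⬝ᵥ q') t := by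
  have hu := hp.matrix_mulVec Ψ
  have hv := hq.matrix_mulVec Ψ
  refine ((((hu.dotProduct_mulVec_self hA).add (hv.dotProduct_mulVec_self hA)).const_mul
    (-(1 / 2))).sub ((hu.sum_sq_add_sq_sq hv).const_mul (γ / 4))).congr_deriv ?_
  simp only [nlsGrad, mulVec_dotProduct_mulVec, ← dotProduct_transpose_mulVec Ψ, sub_dotProduct,
    neg_dotProduct, smul_dotProduct, dotProduct_comm p', dotProduct_comm q', smul_eq_mul]
  ring

end ReducedNLS

theorem reduced_nls_hamiltonian_conserved_general (m l : ℕ) (γ : ℝ)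
    (A : Matrix (Fin m) (Fin m) ℝ) (hA : A.IsSymm)
    (Ψ : Matrix (Fin m) (Fin l) ℝ)
    (B : Matrix (Fin l) (Fin l) ℝ) (hB : B = Ψᵀ * A * Ψ)
    (p q : ℝ → (Fin l → ℝ))
    (hp : ∀ t, HasDerivAt p (fun i =>
      -(B.mulVec (q t)) i - γ * (Ψᵀ.mulVec (fun j =>
        (Ψ.mulVec (q t)) j * ((Ψ.mulVec (p t)) j) ^ 2 + ((Ψ.mulVec (q t)) j) ^ 3)) i) t)
    (hq : ∀ t, HasDerivAt q (fun i =>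
      (Bᵀ.mulVec (p t)) i + γ * (Ψᵀ.mulVec (fun j =>
        (Ψ.mulVec (p t)) j * ((Ψ.mulVec (q t)) j) ^ 2 + ((Ψ.mulVec (p t)) j) ^ 3)) i) t) :
    ∀ t s : ℝ,
      -(1 / 2) * ((Ψ.mulVec (p t)) ⬝ᵥ A.mulVec (Ψ.mulVec (p t))
            + (Ψ.mulVec (q t)) ⬝ᵥ A.mulVec (Ψ.mulVec (q t)))
          - γ / 4 * ∑ j, (((Ψ.mulVec (p t)) j) ^ 2 + ((Ψ.mulVec (q t)) j) ^ 2) ^ 2 =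
        -(1 / 2) * ((Ψ.mulVec (p s)) ⬝ᵥ A.mulVec (Ψ.mulVec (p s))
            + (Ψ.mulVec (q s)) ⬝ᵥ A.mulVec (Ψ.mulVec (q s)))
          - γ / 4 * ∑ j, (((Ψ.mulVec (p s)) j) ^ 2 + ((Ψ.mulVec (q s)) j) ^ 2) ^ 2 := by
  subst hB
  have hp' : ∀ t, HasDerivAt p (nlsGrad γ A Ψ (q t) (p t)) t := hp
  have hq' : ∀ t, HasDerivAt q (-nlsGrad γ A Ψ (p t) (q t)) t := fun t =>
    (hq t).congr_deriv (by
      ext i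
      simp only [nlsGrad, (hA.transpose_mul_mul Ψ).eq, neg_sub, sub_neg_eq_add, Pi.add_apply,
        Pi.smul_apply, smul_eq_mul]
      exact add_comm _ _)
  have hH : ∀ t, HasDerivAt (fun s => nlsHamiltonian γ A Ψ (p s) (q s)) 0 t := fun t =>
    ((hp' t).nlsHamiltonian hA (hq' t)).congr_deriv (by
      rw [dotProduct_neg, dotProduct_comm]; ring)
  intro t s
  exact is_const_of_deriv_eq_zero (fun t => (hH t).differentiableAt) (fun t => (hH t).deriv) t s

theorem reduced_nls_hamiltonian_conserved (m l : ℕ) (γ : ℝ)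
    (A : Matrix (Fin m) (Fin m) ℝ) (hA : A.IsSymm)
    (Ψ : Matrix (Fin m) (Fin l) ℝ) (hΨ : Ψᵀ * Ψ = 1)
    (B : Matrix (Fin l) (Fin l) ℝ) (hB : B = Ψᵀ * A * Ψ)
    (p q : ℝ → (Fin l → ℝ))
    (hp : ∀ t, HasDerivAt p (fun i =>
      -(B.mulVec (q t)) i - γ * (Ψᵀ.mulVec (fun j =>
        (Ψ.mulVec (q t)) j * ((Ψ.mulVec (p t)) j) ^ 2 + ((Ψ.mulVec (q t)) j) ^ 3)) i) t)
    (hq : ∀ t, HasDerivAt q (fun i =>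
      (Bᵀ.mulVec (p t)) i + γ * (Ψᵀ.mulVec (fun j =>
        (Ψ.mulVec (p t)) j * ((Ψ.mulVec (q t)) j) ^ 2 + ((Ψ.mulVec (p t)) j) ^ 3)) i) t) :
    ∀ t s : ℝ,
      -(1 / 2) * ((Ψ.mulVec (p t)) ⬝ᵥ A.mulVec (Ψ.mulVec (p t))
            + (Ψ.mulVec (q t)) ⬝ᵥ A.mulVec (Ψ.mulVec (q t)))
          - γ / 4 * ∑ j, (((Ψ.mulVec (p t)) j) ^ 2 + ((Ψ.mulVec (q t)) j) ^ 2) ^ 2 =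
        -(1 / 2) * ((Ψ.mulVec (p s)) ⬝ᵥ A.mulVec (Ψ.mulVec (p s))
            + (Ψ.mulVec (q s)) ⬝ᵥ A.mulVec (Ψ.mulVec (q s)))
          - γ / 4 * ∑ j, (((Ψ.mulVec (p s)) j) ^ 2 + ((Ψ.mulVec (q s)) j) ^ 2) ^ 2 :=
  reduced_nls_hamiltonian_conserved_general m l γ A hA Ψ B hB p q hp hq
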